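/- Let R be a commutative ring, K a natural number, c : Fin K → R, and P : Fin K → MvPolynomial (Fin K) R a family of polynomials such that for every i, every monomial in the support of P i involves only variables x_j with j < i. Fix an exponent vector α : Fin K → ℕ. Then the coefficient of the monomial ∏_i x_i^{α_i} in the polynomial ∏_i (c_i · x_i + P_i)^{α_i} equals ∏_i c_i^{α_i}. -/

import Mathlib

/-!
Order monomials colexicographically, so that the variable of largest index dominates. Then every
monomial of `P i` lies strictly below `x_i`, so `c_i x_i + P i` has all its exponents `≼ e_i`, with
coefficient `c_i` at `e_i`. For a product of polynomials whose degrees are bounded by `d_i`, the only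
splitting of `∑ d_i` that contributes to the coefficient is `(d_i)_i` itself, so that coefficient is
the product of the coefficients at the `d_i`, whatever zero divisors `R` has.
-/

open MvPolynomial Finsupp
open scoped MonomialOrder

namespace MonomialOrder

section Colex

variable {σ : Type*} [LinearOrder σ] [WellFoundedLT σ]

noncomputable def colex : MonomialOrder σ where
  syn := Colex (σ →₀ ℕ)
  toSyn := { toEquiv := toColex, map_add' := toColex_add }
  toSyn_monotone := Finsupp.toColex_monotone

theorem colex_lt_iff {c d : σ →₀ ℕ} : c ≺[colex] d ↔ toColex c < toColex d := Iff.rfl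

theorem colex_lt_single_one {d : σ →₀ ℕ} {i : σ} (hd : ∀ j, d j ≠ 0 → j < i) :
    d ≺[colex] single i 1 := by
  have hzero : ∀ j, i ≤ j → d j = 0 := fun j hij => by_contra fun h => (hd j h).not_ge hij
  rw [colex_lt_iff, Finsupp.Colex.lt_iff]
  refine ⟨i, fun j hij => ?_, ?_⟩
  · simp [single_eq_of_ne hij.ne', hzero j hij.le]
  · simp [hzero i le_rfl]

end Colex

variable {σ R : Type*} [CommSemiring R] (m : MonomialOrder σ)

theorem degree_pow_le_nsmul {f : MvPolynomial σ R} {d : σ →₀ ℕ} (h : m.degree f ≼[m] d) (n : ℕ) :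
    m.degree (f ^ n) ≼[m] n • d := by
  grw [m.degree_pow_le, map_nsmul, map_nsmul, h]

theorem coeff_nsmul_pow_of_degree_le {f : MvPolynomial σ R} {d : σ →₀ ℕ}
    (h : m.degree f ≼[m] d) (n : ℕ) : coeff (n • d) (f ^ n) = coeff d f ^ n := by
  induction n with
  | zero => simp
  | succ n ih =>
    rw [succ_nsmul, pow_succ, m.coeff_mul_of_add_of_degree_le (m.degree_pow_le_nsmul h n) h, ih,
      pow_succ]

theorem coeff_sum_prod_of_degree_le {ι : Type*} {s : Finset ι} {f : ι → MvPolynomial σ R}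
    {d : ι → σ →₀ ℕ} (h : ∀ i ∈ s, m.degree (f i) ≼[m] d i) :
    coeff (∑ i ∈ s, d i) (∏ i ∈ s, f i) = ∏ i ∈ s, coeff (d i) (f i) := by
  classical
  induction s using Finset.induction_on with
  | empty => simp
  | insert a s has ih =>
    have hs : m.degree (∏ i ∈ s, f i) ≼[m] ∑ i ∈ s, d i := by
      grw [m.degree_prod_le, map_sum, map_sum]
      exact Finset.sum_le_sum fun i hi => h i (Finset.mem_insert_of_mem hi)
    rw [Finset.sum_insert has, Finset.prod_insert has, Finset.prod_insert has,
      m.coeff_mul_of_add_of_degree_le (h a (Finset.mem_insert_self a s)) hs,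
      ih fun i hi => h i (Finset.mem_insert_of_mem hi)]

theorem degree_C_mul_X_add_le {p : MvPolynomial σ R} {i : σ} (c : R)
    (hp : ∀ d ∈ p.support, d ≺[m] single i 1) : m.degree (C c * X i + p) ≼[m] single i 1 := by
  grw [m.degree_add_le, C_mul_X_eq_monomial, m.degree_monomial_le]
  exact sup_le le_rfl (m.degree_le_iff.mpr fun d hd => (hp d hd).le)

theorem coeff_single_one_C_mul_X_add {p : MvPolynomial σ R} {i : σ} (c : R)
    (hp : ∀ d ∈ p.support, d ≺[m] single i 1) : coeff (single i 1) (C c * X i + p) = c := by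
  classical
  rw [coeff_add, C_mul_X_eq_monomial, coeff_monomial, if_pos rfl,
    MvPolynomial.notMem_support_iff.mp fun h => lt_irrefl _ (hp _ h), add_zero]

theorem coeff_prod_C_mul_X_add_pow [Fintype σ] (c : σ → R) {P : σ → MvPolynomial σ R}
    (hP : ∀ i, ∀ d ∈ (P i).support, d ≺[m] single i 1) (α : σ → ℕ) :
    coeff (equivFunOnFinite.symm α) (∏ i, (C (c i) * X i + P i) ^ α i) = ∏ i, c i ^ α i := by
  have hdeg i := m.degree_C_mul_X_add_le (c i) (hP i)
  have hα : equivFunOnFinite.symm α = ∑ i, α i • single i 1 := by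
    simp_rw [smul_single_one, equivFunOnFinite_symm_eq_sum]
  rw [hα, m.coeff_sum_prod_of_degree_le fun i _ => m.degree_pow_le_nsmul (hdeg i) (α i)]
  simp_rw [m.coeff_nsmul_pow_of_degree_le (hdeg _), m.coeff_single_one_C_mul_X_add _ (hP _)]

end MonomialOrder

/-- The leading monomial of the triangular product survives: the coefficient of
`∏ i, X i ^ α i` in `∏ i, (c i • X i + P i) ^ α i` is `∏ i, c i ^ α i`. -/
theorem stmt_1 (R : Type*) [CommRing R] (K : ℕ)
    (c : Fin K → R) (P : Fin K → MvPolynomial (Fin K) R)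
    (hP : ∀ i : Fin K, ∀ m ∈ (P i).support, ∀ j : Fin K, m j ≠ 0 → j < i)
    (α : Fin K → ℕ) :
    MvPolynomial.coeff (Finsupp.equivFunOnFinite.symm α)
        (∏ i : Fin K, (MvPolynomial.C (c i) * MvPolynomial.X i + P i) ^ (α i))
      = ∏ i : Fin K, c i ^ α i :=
  MonomialOrder.colex.coeff_prod_C_mul_X_add_pow c
    (fun i d hd => MonomialOrder.colex_lt_single_one (hP i d hd)) α
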